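/- Let 𝒦 be a Kakeya set in an affine plane of order q with |𝒦| > q² - min{⌈κ⌉(q-⌈κ⌉), q(q-⌊κ⌋)/(⌊κ⌋+1)} where κ = √(q+1/4) - 1/2. Then 𝒦 contains a (q+1-k)-knot for some integer k with 0 ≤ k < ⌈κ⌉, and |𝒦| ∈ [q² - kq + k(k+1)/2, q² - kq + k²]. -/

import Mathlib

/-- An affine plane of order `q`: `q²` points, every line has `q` points, the lines fall
into `q+1` parallel classes each of which partitions the point set (every point lies on a
unique line of each class), and two non-parallel lines meet in exactly one point. -/
structure AffinePlaneOrder (q : ℕ) where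
  Point : Type
  Line : Type
  mem : Point → Line → Prop
  pointCount : Nat.card Point = q ^ 2
  lineSize : ∀ l : Line, {p : Point | mem p l}.ncard = q
  parClass : Line → Fin (q + 1)
  point_class : ∀ (p : Point) (c : Fin (q + 1)), ∃! l : Line, parClass l = c ∧ mem p l
  meet : ∀ l m : Line, parClass l ≠ parClass m → ∃! p : Point, mem p l ∧ mem p m

/-- A Kakeya line set: one line from each parallel class. -/
def IsKakeyaLines {q : ℕ} (A : AffinePlaneOrder q) (L : Fin (q + 1) → A.Line) : Prop :=
  ∀ c, A.parClass (L c) = c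

/-- The Kakeya set determined by the lines `L`: all points covered by some line of `L`. -/
def kakeyaSet {q : ℕ} (A : AffinePlaneOrder q) (L : Fin (q + 1) → A.Line) : Set A.Point :=
  {p | ∃ c, A.mem p (L c)}

/-- The number of lines of `L` through `p`; `p` is a `j`-knot when this equals `j`. -/
noncomputable def knotCount {q : ℕ} (A : AffinePlaneOrder q) (L : Fin (q + 1) → A.Line) (p : A.Point) : ℕ :=
  {c : Fin (q + 1) | A.mem p (L c)}.ncard

/-!
Let `P` be a point lying on the largest number `m = q + 1 - k` of lines of `𝓛`. The `m` lines
through `P` cover `m(q-1)+1` points; each of the other `k` lines meets each of them in a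
different point, hence adds `q - m = k - 1` further points, and two of these lines share at
most one point. This pins `|𝒦|` between `q² - kq + k(k+1)/2` and `q² - kq + k²`.
If `k ≥ ⌈κ⌉`, then either `m ≤ ⌊κ⌋ + 1`, and double counting `∑ j = ∑ j(j-1) = q(q+1)`
over the points of `𝒦` gives `|𝒦| ≤ q(q+1)(1 - 1/m)`, or `m ≥ ⌊κ⌋ + 2`, and
`⌈κ⌉ ≤ k ≤ q - ⌈κ⌉` (using `κ² + κ = q` when `κ` is an integer) makes `k(q-k)` at least the
minimum in the hypothesis. Both contradict the bound on `|𝒦|`.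
-/

open Finset

theorem Finset.sum_card_le_card_biUnion_add_choose_two {ι α : Type*} [DecidableEq ι]
    [DecidableEq α] (s : Finset ι) (f : ι → Finset α)
    (h : ∀ i ∈ s, ∀ j ∈ s, i ≠ j → #(f i ∩ f j) ≤ 1) :
    ∑ i ∈ s, #(f i) ≤ #(s.biUnion f) + (#s).choose 2 := by
  induction s using Finset.induction_on with
  | empty => simp
  | @insert a s ha ih =>
    have hmeet : #(f a ∩ s.biUnion f) ≤ #s := calc
      #(f a ∩ s.biUnion f) = #(s.biUnion fun i => f a ∩ f i) := by rw [inter_biUnion]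
      _ ≤ ∑ i ∈ s, #(f a ∩ f i) := card_biUnion_le
      _ ≤ ∑ _i ∈ s, 1 := sum_le_sum fun i hi =>
          h a (mem_insert_self a s) i (mem_insert_of_mem hi) (by rintro rfl; exact ha hi)
      _ = #s := by simp
    have hunion := card_union_add_card_inter (f a) (s.biUnion f)
    have ih' := ih fun i hi j hj => h i (mem_insert_of_mem hi) j (mem_insert_of_mem hj)
    have hchoose : (#s + 1).choose 2 = (#s).choose 2 + #s := by
      rw [Nat.choose_succ_succ', Nat.choose_one_right, add_comm]
    rw [sum_insert ha, biUnion_insert, card_insert_of_notMem ha, hchoose]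
    omega

theorem sqrt_add_quarter_sub_half_nonneg {x : ℝ} (hx : 0 ≤ x) : 0 ≤ √(x + 1/4) - 1/2 := by
  have : √(1/4 : ℝ) = 1/2 := by
    rw [show (1/4 : ℝ) = (1/2)^2 by norm_num, Real.sqrt_sq (by norm_num)]
  linarith [Real.sqrt_le_sqrt (show (1/4 : ℝ) ≤ x + 1/4 by linarith)]

theorem sqrt_add_quarter_sub_half_sq_add {x : ℝ} (hx : -(1/4) ≤ x) :
    (√(x + 1/4) - 1/2) ^ 2 + (√(x + 1/4) - 1/2) = x := by
  have := Real.sq_sqrt (show 0 ≤ x + 1/4 by linarith)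
  linear_combination this

theorem le_sq_sub_div_of_add_mul_le {q f m N : ℝ} (hq : 0 ≤ q) (hm : 0 < m) (hmf : m ≤ f + 1)
    (h : (q + 1) * q + m * N ≤ m * ((q + 1) * q)) : N ≤ q ^ 2 - q * (q - f) / (f + 1) := by
  have hN : N ≤ (q + 1) * q - (q + 1) * q / m := by
    rw [le_sub_iff_add_le, add_div' _ _ _ hm.ne', div_le_iff₀ hm]
    linarith
  have hmono : (q + 1) * q / (f + 1) ≤ (q + 1) * q / m :=
    div_le_div_of_nonneg_left (by positivity) hm hmf
  have hid : q ^ 2 - q * (q - f) / (f + 1) = (q + 1) * q - (q + 1) * q / (f + 1) := by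
    field_simp [(hm.trans_le hmf).ne']
    ring
  linarith

theorem min_le_mul_sub_of_ceil_le {κ q k : ℝ} (hκ : 0 ≤ κ) (hq : κ ^ 2 + κ = q)
    (hk : ⌈κ⌉ ≤ k) (hk' : k ≤ q - 1 - ⌊κ⌋) :
    min (⌈κ⌉ * (q - ⌈κ⌉)) (q * (q - ⌊κ⌋) / (⌊κ⌋ + 1)) ≤ k * (q - k) := by
  rcases (Int.floor_le_ceil κ).eq_or_lt with hfc | hfc
  · have hκf : κ = ⌊κ⌋ := le_antisymm (hfc ▸ Int.le_ceil κ) (Int.floor_le κ)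
    rw [← hfc] at hk
    rw [hκf] at hκ hq
    subst hq
    have hkf : 0 ≤ (k - ⌊κ⌋) * (⌊κ⌋ ^ 2 - 1 - k) := mul_nonneg (by linarith) (by linarith)
    calc _ ≤ _ := min_le_right _ _
      _ = (⌊κ⌋ : ℝ) ^ 3 := by field_simp; ring
      _ ≤ _ := by linarith
  · have hc : (⌈κ⌉ : ℝ) = ⌊κ⌋ + 1 := by
      exact_mod_cast (Int.ceil_le_floor_add_one κ).antisymm hfc
    have hkc : 0 ≤ (k - ⌈κ⌉) * (q - ⌈κ⌉ - k) := mul_nonneg (by linarith) (by linarith)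
    calc _ ≤ (⌈κ⌉ : ℝ) * (q - ⌈κ⌉) := min_le_left _ _
      _ ≤ k * (q - k) := by linarith

theorem lt_ceil_of_sq_sub_min_lt {κ q N k : ℝ} {m : ℕ} (hκ : 0 ≤ κ)
    (hκq : κ ^ 2 + κ = q) (hm : 0 < m) (hmk : m + k = q + 1)
    (hdc : (q + 1) * q + m * N ≤ m * ((q + 1) * q)) (hup : N ≤ q ^ 2 - k * q + k ^ 2)
    (hsize : q ^ 2 - min (⌈κ⌉ * (q - ⌈κ⌉)) (q * (q - ⌊κ⌋) / (⌊κ⌋ + 1)) < N) :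
    k < ⌈κ⌉ := by
  by_contra! hk
  rcases le_or_gt (m : ℝ) (⌊κ⌋ + 1) with hmf | hmf
  · have := le_sq_sub_div_of_add_mul_le (hκq ▸ by positivity) (by exact_mod_cast hm) hmf hdc
    linarith [min_le_right (⌈κ⌉ * (q - ⌈κ⌉)) (q * (q - ⌊κ⌋) / (⌊κ⌋ + 1))]
  · have hmf' : (⌊κ⌋ : ℝ) + 2 ≤ m := by
      have : ⌊κ⌋ + 1 < (m : ℤ) := by exact_mod_cast hmf
      exact_mod_cast (show ⌊κ⌋ + 2 ≤ (m : ℤ) by omega)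
    have := min_le_mul_sub_of_ceil_le hκ hκq hk (by linarith)
    linarith

namespace AffinePlaneOrder

open scoped Classical

variable {q : ℕ} {A : AffinePlaneOrder q} {L : Fin (q + 1) → A.Line}

theorem eq_of_mem_of_mem {l m : A.Line} (h : A.parClass l ≠ A.parClass m) {x y : A.Point}
    (hxl : A.mem x l) (hxm : A.mem x m) (hyl : A.mem y l) (hym : A.mem y m) : x = y :=
  (A.meet l m h).unique ⟨hxl, hxm⟩ ⟨hyl, hym⟩

theorem _root_.IsKakeyaLines.parClass_ne (hL : IsKakeyaLines A L) {c c' : Fin (q + 1)}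
    (h : c ≠ c') : A.parClass (L c) ≠ A.parClass (L c') := by
  rwa [hL c, hL c']

variable (L) in
noncomputable def linesThrough (p : A.Point) : Finset (Fin (q + 1)) := {c | A.mem p (L c)}

@[simp] theorem mem_linesThrough {p : A.Point} {c : Fin (q + 1)} :
    c ∈ linesThrough L p ↔ A.mem p (L c) := by
  simp [linesThrough]

variable (L) in
theorem card_linesThrough (p : A.Point) : #(linesThrough L p) = knotCount A L p := by
  rw [knotCount, ← Set.ncard_coe_finset, linesThrough, coe_filter]
  simp

variable (L) in
theorem knotCount_le (p : A.Point) : knotCount A L p ≤ q + 1 := by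
  simpa [card_linesThrough] using card_le_univ (linesThrough L p)

theorem eq_of_mem_linesThrough (hL : IsKakeyaLines A L) {P x : A.Point} {c c' : Fin (q + 1)}
    (hc : c ∈ linesThrough L P) (hc' : c' ∈ linesThrough L P) (hcc' : c ≠ c')
    (hxc : A.mem x (L c)) (hxc' : A.mem x (L c')) : x = P :=
  eq_of_mem_of_mem (hL.parClass_ne hcc') hxc hxc' (mem_linesThrough.1 hc)
    (mem_linesThrough.1 hc')

section Finite

variable [Fintype A.Point]

noncomputable def points (l : A.Line) : Finset A.Point := {p | A.mem p l}

@[simp] theorem mem_points {p : A.Point} {l : A.Line} : p ∈ points l ↔ A.mem p l := by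
  simp [points]

theorem card_points (l : A.Line) : #(points l) = q := by
  rw [← Set.ncard_coe_finset, points, coe_filter]
  simpa using A.lineSize l

theorem card_points_inter_points {l m : A.Line} (h : A.parClass l ≠ A.parClass m) :
    #(points l ∩ points m) = 1 := by
  obtain ⟨p, hp, -⟩ := A.meet l m h
  rw [card_eq_one]
  refine ⟨p, ext fun x => ?_⟩
  simp only [mem_inter, mem_points, mem_singleton]
  exact ⟨fun hx => eq_of_mem_of_mem h hx.1 hx.2 hp.1 hp.2, by rintro rfl; exact hp⟩

variable (L) in
noncomputable def kakeyaFinset : Finset A.Point := univ.biUnion fun c => points (L c)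

@[simp] theorem mem_kakeyaFinset {p : A.Point} : p ∈ kakeyaFinset L ↔ ∃ c, A.mem p (L c) := by
  simp [kakeyaFinset]

variable (L) in
theorem ncard_kakeyaSet : (kakeyaSet A L).ncard = #(kakeyaFinset L) := by
  rw [← Set.ncard_coe_finset]
  congr
  ext
  simp [kakeyaSet]

variable (L) in
theorem sum_card_linesThrough : ∑ p, #(linesThrough L p) = (q + 1) * q := calc
  ∑ p, #(linesThrough L p) = ∑ c, #(points (L c)) :=
    sum_card_bipartiteAbove_eq_sum_card_bipartiteBelow _
  _ = (q + 1) * q := by simp [card_points]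

theorem sum_card_offDiag_linesThrough (hL : IsKakeyaLines A L) :
    ∑ p, #(linesThrough L p).offDiag = (q + 1) * q := calc
  ∑ p, #(linesThrough L p).offDiag
      = ∑ p, #((univ : Finset (Fin (q + 1))).offDiag.bipartiteAbove
          (fun p e => e ∈ (linesThrough L p).offDiag) p) := by
    congr! with p
    rw [bipartiteAbove, filter_mem_eq_inter, inter_eq_right.2 (offDiag_mono (subset_univ _))]
  _ = ∑ e ∈ (univ : Finset (Fin (q + 1))).offDiag, #(points (L e.1) ∩ points (L e.2)) := by
    rw [sum_card_bipartiteAbove_eq_sum_card_bipartiteBelow]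
    refine sum_congr rfl fun e he => congrArg card (ext fun p => ?_)
    simp_all [bipartiteBelow]
  _ = (q + 1) * q := by
    rw [sum_congr rfl fun e he => card_points_inter_points (hL.parClass_ne (mem_offDiag.1 he).2.2)]
    simp [offDiag_card, Nat.mul_succ]

theorem add_mul_card_kakeyaFinset_le (hL : IsKakeyaLines A L) {m : ℕ}
    (hm : ∀ p, knotCount A L p ≤ m) :
    (q + 1) * q + m * #(kakeyaFinset L) ≤ m * ((q + 1) * q) := by
  have hpoint (p : A.Point) : #(linesThrough L p).offDiag
      + (if p ∈ kakeyaFinset L then m else 0) ≤ m * #(linesThrough L p) := by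
    have hjm := card_linesThrough L p ▸ hm p
    rw [offDiag_card]
    split_ifs with hp
    · obtain ⟨c, hc⟩ := mem_kakeyaFinset.1 hp
      obtain ⟨i, hi⟩ := Nat.exists_eq_add_of_lt (card_pos.2 ⟨c, mem_linesThrough.2 hc⟩)
      rw [zero_add] at hi
      rw [hi, Nat.mul_succ, Nat.add_sub_cancel]
      nlinarith
    · have : linesThrough L p = ∅ := by
        ext c
        simpa using fun hc => hp (mem_kakeyaFinset.2 ⟨c, hc⟩)
      simp [this]
  have := sum_le_sum fun p (_ : p ∈ univ) => hpoint p
  rw [sum_add_distrib, sum_card_offDiag_linesThrough hL, ← mul_sum, sum_card_linesThrough,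
    sum_ite_mem, univ_inter, sum_const, smul_eq_mul] at this
  linarith

variable (L) in
theorem exists_forall_knotCount_le (hq : 0 < q) :
    ∃ P, 0 < knotCount A L P ∧ ∀ p, knotCount A L p ≤ knotCount A L P := by
  obtain ⟨p, hp⟩ := card_pos.1 ((card_points (L 0)).symm ▸ hq : 0 < #(points (L 0)))
  have : Nonempty A.Point := ⟨p⟩
  obtain ⟨P, hP⟩ := Finite.exists_max (knotCount A L)
  refine ⟨P, ?_, hP⟩
  have hp' := hP p
  rw [← card_linesThrough] at hp'
  exact (card_pos.2 ⟨0, mem_linesThrough.2 (mem_points.1 hp)⟩).trans_le hp'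

variable (L) in
noncomputable def pencil (P : A.Point) : Finset A.Point :=
  (linesThrough L P).biUnion fun c => points (L c)

theorem card_pencil (hL : IsKakeyaLines A L) {P : A.Point} (hP : (linesThrough L P).Nonempty) :
    #(pencil L P) = #(linesThrough L P) * (q - 1) + 1 := by
  have hsplit : pencil L P =
      insert P ((linesThrough L P).biUnion fun c => (points (L c)).erase P) := by
    ext x
    by_cases hx : x = P
    · obtain ⟨c, hc⟩ := hP
      simpa [pencil, hx] using ⟨c, mem_linesThrough.1 hc⟩
    · simp [pencil, hx]
  rw [hsplit, card_insert_of_notMem (by simp), card_biUnion]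
  · rw [sum_congr rfl fun c hc => by
      rw [card_erase_of_mem (mem_points.2 (mem_linesThrough.1 hc)), card_points]]
    simp
  · intro c hc c' hc' hcc'
    simp only [Function.onFun, disjoint_left, mem_erase, mem_points]
    exact fun x hx hx' => hx.1 (eq_of_mem_linesThrough hL hc hc' hcc' hx.2 hx'.2)

theorem card_points_inter_pencil (hL : IsKakeyaLines A L) {P : A.Point} {c : Fin (q + 1)}
    (hc : c ∉ linesThrough L P) : #(points (L c) ∩ pencil L P) = #(linesThrough L P) := by
  have hne {c'} (hc' : c' ∈ linesThrough L P) : c ≠ c' := by rintro rfl; exact hc hc'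
  rw [pencil, inter_biUnion, card_biUnion]
  · rw [sum_congr rfl fun c' hc' => card_points_inter_points (hL.parClass_ne (hne hc'))]
    simp
  · intro c₁ hc₁ c₂ hc₂ h₁₂
    simp only [Function.onFun, disjoint_left, mem_inter, mem_points]
    intro x hx₁ hx₂
    have hxP := eq_of_mem_linesThrough hL hc₁ hc₂ h₁₂ hx₁.2 hx₂.2
    exact hc (mem_linesThrough.2 (hxP ▸ hx₁.1))

theorem card_points_sdiff_pencil (hL : IsKakeyaLines A L) {P : A.Point} {c : Fin (q + 1)}
    (hc : c ∉ linesThrough L P) : #(points (L c) \ pencil L P) = q - #(linesThrough L P) := by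
  rw [card_sdiff, inter_comm, card_points_inter_pencil hL hc, card_points]

variable (L) in
theorem kakeyaFinset_eq_pencil_union (P : A.Point) :
    kakeyaFinset L =
      pencil L P ∪ (linesThrough L P)ᶜ.biUnion fun c => points (L c) \ pencil L P := by
  ext x
  simp only [mem_kakeyaFinset, mem_union, mem_biUnion, mem_compl, mem_sdiff, mem_points]
  constructor
  · rintro ⟨c, hc⟩
    by_cases hx : x ∈ pencil L P
    · exact Or.inl hx
    · refine Or.inr ⟨c, fun hcP => hx ?_, hc, hx⟩
      exact mem_biUnion.2 ⟨c, hcP, mem_points.2 hc⟩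
  · rintro (hx | ⟨c, -, hc, -⟩)
    · obtain ⟨c, -, hc⟩ := mem_biUnion.1 hx
      exact ⟨c, mem_points.1 hc⟩
    · exact ⟨c, hc⟩

theorem card_kakeyaFinset_le (hL : IsKakeyaLines A L) (P : A.Point) :
    #(kakeyaFinset L) ≤ #(pencil L P) + #(linesThrough L P)ᶜ * (q - #(linesThrough L P)) := by
  rw [kakeyaFinset_eq_pencil_union L P]
  refine (card_union_le _ _).trans (Nat.add_le_add_left (card_biUnion_le.trans_eq ?_) _)
  rw [sum_congr rfl fun c hc => card_points_sdiff_pencil hL (mem_compl.1 hc), sum_const,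
    smul_eq_mul]

theorem le_card_kakeyaFinset_add_choose_two (hL : IsKakeyaLines A L) (P : A.Point) :
    #(pencil L P) + #(linesThrough L P)ᶜ * (q - #(linesThrough L P))
      ≤ #(kakeyaFinset L) + (#(linesThrough L P)ᶜ).choose 2 := by
  have hdisj : Disjoint (pencil L P)
      ((linesThrough L P)ᶜ.biUnion fun c => points (L c) \ pencil L P) := by
    simp only [disjoint_right, mem_biUnion, mem_sdiff]
    rintro x ⟨c, -, -, hx⟩
    exact hx
  have hpair : ∀ c ∈ (linesThrough L P)ᶜ, ∀ c' ∈ (linesThrough L P)ᶜ, c ≠ c' →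
      #((points (L c) \ pencil L P) ∩ (points (L c') \ pencil L P)) ≤ 1 := fun c _ c' _ h =>
    (card_le_card (inter_subset_inter sdiff_subset sdiff_subset)).trans
      (card_points_inter_points (hL.parClass_ne h)).le
  have hsum := sum_card_le_card_biUnion_add_choose_two _ _ hpair
  rw [sum_congr rfl fun c hc => card_points_sdiff_pencil hL (mem_compl.1 hc), sum_const,
    smul_eq_mul] at hsum
  rw [kakeyaFinset_eq_pencil_union L P, card_union_of_disjoint hdisj]
  omega

theorem card_kakeyaFinset_mem_Icc (hL : IsKakeyaLines A L) {P : A.Point} {k : ℕ}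
    (hP : knotCount A L P = q + 1 - k) (hk : k ≤ q) :
    (#(kakeyaFinset L) : ℝ) ∈
      Set.Icc (α := ℝ) (q ^ 2 - k * q + k * (k + 1) / 2) (q ^ 2 - k * q + k ^ 2) := by
  have hT : #(linesThrough L P) = q + 1 - k := (card_linesThrough L P).trans hP
  have hTc : #(linesThrough L P)ᶜ = k := by rw [card_compl, Fintype.card_fin, hT]; omega
  have hTne : (linesThrough L P).Nonempty := card_pos.1 (by omega)
  have hq : 1 ≤ q := by
    obtain ⟨c, hc⟩ := hTne
    exact card_points (L c) ▸ card_pos.2 ⟨P, mem_points.2 (mem_linesThrough.1 hc)⟩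
  have hup := card_kakeyaFinset_le hL P
  have hlow := le_card_kakeyaFinset_add_choose_two hL P
  rw [card_pencil hL hTne, hTc, hT] at hup hlow
  have hm : ((q + 1 - k : ℕ) : ℝ) = q + 1 - k := by
    rw [Nat.cast_sub (by omega)]
    push_cast
    ring
  have hq1 : ((q - 1 : ℕ) : ℝ) = q - 1 := by
    rw [Nat.cast_sub hq]
    simp
  have houter : (k : ℝ) * ((q - (q + 1 - k) : ℕ) : ℝ) = k * (k - 1) := by
    rcases Nat.eq_zero_or_pos k with rfl | hk0
    · simp
    · rw [show q - (q + 1 - k) = k - 1 by omega, Nat.cast_sub hk0]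
      simp
  have hup' : (#(kakeyaFinset L) : ℝ) ≤ _ := Nat.cast_le.2 hup
  have hlow' : _ ≤ ((#(kakeyaFinset L) + k.choose 2 : ℕ) : ℝ) := Nat.cast_le.2 hlow
  push_cast [Nat.cast_choose_two] at hup' hlow'
  rw [hm, hq1, houter] at hup' hlow'
  exact ⟨by linarith, by linarith⟩

end Finite

end AffinePlaneOrder

open AffinePlaneOrder

/-- Main theorem: if a Kakeya set satisfies
`|𝒦| > q² - min{⌈κ⌉(q-⌈κ⌉), q(q-⌊κ⌋)/(⌊κ⌋+1)}` with `κ = √(q+1/4) - 1/2`, then it has a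
`(q+1-k)`-knot for some `0 ≤ k < ⌈κ⌉`, and `|𝒦| ∈ [q² - kq + k(k+1)/2, q² - kq + k²]`. -/
theorem main_theorem {q : ℕ} (A : AffinePlaneOrder q) (L : Fin (q + 1) → A.Line)
    (hL : IsKakeyaLines A L)
    (hsize : ((kakeyaSet A L).ncard : ℝ) >
      (q : ℝ) ^ 2 - min
        ((⌈Real.sqrt ((q : ℝ) + 1/4) - 1/2⌉ : ℝ) * ((q : ℝ) - (⌈Real.sqrt ((q : ℝ) + 1/4) - 1/2⌉ : ℝ)))
        ((q : ℝ) * ((q : ℝ) - (⌊Real.sqrt ((q : ℝ) + 1/4) - 1/2⌋ : ℝ)) /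
          ((⌊Real.sqrt ((q : ℝ) + 1/4) - 1/2⌋ : ℝ) + 1))) :
    ∃ k : ℕ, (k : ℝ) < (⌈Real.sqrt ((q : ℝ) + 1/4) - 1/2⌉ : ℝ) ∧
      (∃ P : A.Point, knotCount A L P = q + 1 - k) ∧
      (q : ℝ) ^ 2 - k * q + k * (k + 1) / 2 ≤ ((kakeyaSet A L).ncard : ℝ) ∧
      ((kakeyaSet A L).ncard : ℝ) ≤ (q : ℝ) ^ 2 - k * q + k ^ 2 := by
  obtain rfl | hq := Nat.eq_zero_or_pos q
  · -- for `q = 0` the hypothesis says `|𝒦| > 0`, but `𝒦` is the single line `L 0`, which is empty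
    have hK : kakeyaSet A L = {p | A.mem p (L 0)} := by
      ext p
      simp [kakeyaSet, Fin.exists_fin_one]
    simp [hK, A.lineSize] at hsize
  have : Finite A.Point := Nat.finite_of_card_ne_zero (by simp [A.pointCount, hq.ne'])
  have := Fintype.ofFinite A.Point
  obtain ⟨P, hPpos, hPmax⟩ := exists_forall_knotCount_le L hq
  have hPle := knotCount_le L P
  have hknot : knotCount A L P = q + 1 - (q + 1 - knotCount A L P) := by omega
  rw [ncard_kakeyaSet] at hsize ⊢
  obtain ⟨hlow, hup⟩ := card_kakeyaFinset_mem_Icc hL hknot (by omega)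
  refine ⟨_, ?_, ⟨P, hknot⟩, hlow, hup⟩
  have hq' : (0 : ℝ) ≤ q := q.cast_nonneg
  refine lt_ceil_of_sq_sub_min_lt (sqrt_add_quarter_sub_half_nonneg hq')
    (sqrt_add_quarter_sub_half_sq_add (by linarith)) hPpos ?_ ?_ hup hsize
  · push_cast [hPle]
    ring
  · exact_mod_cast add_mul_card_kakeyaFinset_le hL hPmax
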